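/- For every α in the relational model D, the interpretation of the associated closed term α⁺ is exactly the singleton {α}, and the interpretation of the test context α⁻[x] (with free variable x) is the singleton {[α]}. -/

import Mathlib

/-- Terms of the `∂₀λ`-calculus with tests; a test is a (multiset, represented as a)
list of terms, and `taubar V` is the term `τ̄(V)`. -/
inductive Tm : Type
  | var : ℕ → Tm
  | lam : ℕ → Tm → Tm
  | app : Tm → List Tm → Tm
  | taubar : List Tm → Tm

variable {D : Type*}

mutual
/-- Relational interpretation of terms in the reflexive object `D ≅ Multiset D × D`
(`star` is the element `* = ([],[],…)`), with environments `ρ : ℕ → Multiset D`. -/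
def interp (e : D ≃ Multiset D × D) (star : D) : Tm → Set ((ℕ → Multiset D) × D)
  | .var y => {p | p.1 y = {p.2} ∧ ∀ z : ℕ, z ≠ y → p.1 z = 0}
  | .lam y M => {p | ∃ (b : Multiset D) (α : D), p.2 = e.symm (b, α) ∧ p.1 y = 0 ∧
      (Function.update p.1 y b, α) ∈ interp e star M}
  | .app M P => {p | ∃ (ρ₁ ρ₂ : ℕ → Multiset D) (b : Multiset D), p.1 = ρ₁ + ρ₂ ∧
      (ρ₁, e.symm (b, p.2)) ∈ interp e star M ∧ (ρ₂, b) ∈ interpBag e star P}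
  | .taubar V => {p | p.2 = star ∧ p.1 ∈ interpTest e star V}
/-- Relational interpretation of bags. -/
def interpBag (e : D ≃ Multiset D × D) (star : D) :
    List Tm → Set ((ℕ → Multiset D) × Multiset D)
  | [] => {p | p.1 = 0 ∧ p.2 = 0}
  | L :: P => {p | ∃ (ρ₁ ρ₂ : ℕ → Multiset D) (β : D) (b : Multiset D), p.1 = ρ₁ + ρ₂ ∧
      (ρ₁, β) ∈ interp e star L ∧ (ρ₂, b) ∈ interpBag e star P ∧ p.2 = β ::ₘ b}
/-- Relational interpretation of tests. -/
def interpTest (e : D ≃ Multiset D × D) (star : D) : List Tm → Set (ℕ → Multiset D)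
  | [] => {ρ | ρ = 0}
  | L :: V => {ρ | ∃ ρ₁ ρ₂ : ℕ → Multiset D, ρ = ρ₁ + ρ₂ ∧
      (ρ₁, star) ∈ interp e star L ∧ ρ₂ ∈ interpTest e star V}
end

/-- The `i`-th multiset component of an element of `D ≅ Multiset D × D`. -/
def seqD (e : D ≃ Multiset D × D) : ℕ → D → Multiset D
  | 0, α => (e α).1
  | i + 1, α => seqD e i (e α).2

/-- The element `a₁ :: ⋯ :: a_r :: *` of `D` determined by a finite list of multisets. -/
def buildD (e : D ≃ Multiset D × D) (star : D) (as : List (Multiset D)) : D :=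
  as.foldr (fun a β => e.symm (a, β)) star

/-- Parallel composition of a list of tests. -/
def parallel (ts : List (List Tm)) : List Tm := ts.foldr (· ++ ·) []

/-- `λx₁…x_r.body`. -/
def lamMany (r : ℕ) (body : Tm) : Tm := (List.range r).foldr Tm.lam body

/-- The term `α⁺ = λx₁…x_r.τ̄(∥ᵢ∥ⱼ (α_{i,j})⁻[xᵢ])` prescribed for
`α = a₁ :: ⋯ :: a_r :: *`, in terms of the test-context map `mt` (`mt β M` is the
test `β⁻[M]`). -/
noncomputable def plusSpec (mt : D → Tm → List Tm) (as : List (Multiset D)) : Tm :=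
  lamMany as.length (Tm.taubar (parallel ((List.range as.length).map
    (fun i => parallel ((as.getD i 0).toList.map (fun β => mt β (Tm.var i)))))))

/-- The test `α⁻[M] = τ[M [α_{1,1}⁺,…] ⋯ [α_{r,1}⁺,…]]` prescribed for
`α = a₁ :: ⋯ :: a_r :: *`, in terms of the term map `p` (`p β` is `β⁺`). -/
noncomputable def minusSpec (p : D → Tm) (as : List (Multiset D)) (M : Tm) : List Tm :=
  [(as.map (fun a => (a.map p).toList)).foldl Tm.app M]

/-!
Both claims are proved together by well-founded induction on `α`. Tests, bags and parallel
composition denote pointwise sums of sets, so a parallel composition of singletons is a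
singleton. For `α⁻[x]`, the bags `[α_{i,1}⁺,…]` denote exactly `{(0, aᵢ)}` by induction, so
applying `x` to them forces `x` to receive `a₁ :: ⋯ :: a_r :: * = α`. For `α⁺`, the body test
denotes exactly the environment `xᵢ ↦ aᵢ`, and each abstraction `λxᵢ` moves `aᵢ` from the
environment into the point, rebuilding `α`.
-/

lemma setOf_eq_singleton_pi_single {ι M : Type*} [DecidableEq ι] [Zero M] (i : ι) (m : M) :
    {f : ι → M | f i = m ∧ ∀ j, j ≠ i → f j = 0} = {Pi.single i m} :=
  Set.ext fun _ => Function.eq_update_iff.symm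

lemma sum_range_pi_single_getD {M : Type*} [AddCommMonoid M] (l : List M) :
    ((List.range l.length).map fun i => Pi.single i (l.getD i 0)).sum = fun j => l.getD j 0 := by
  change ∑ i ∈ Finset.range l.length, Pi.single i (l.getD i 0) = _
  funext j
  rw [Finset.sum_apply, Finset.sum_pi_single]
  split_ifs with hj
  · rfl
  · rw [List.getD_eq_default _ _ (by simpa using hj)]

lemma map_range_getD {M : Type*} [Zero M] (l : List M) :
    (List.range l.length).map (fun i => l.getD i 0) = l :=
  List.ext_getElem (by simp) fun i _ hi => by simp [hi]

open scoped Pointwise in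
lemma Set.list_sum_map_singleton {ι M : Type*} [AddMonoid M] (l : List ι) (f : ι → M) :
    (l.map fun i => ({f i} : Set M)).sum = {(l.map f).sum} := by
  rw [← Set.list_sum_singleton, List.map_map]; rfl

open scoped Pointwise in
lemma Set.multiset_sum_map_singleton {ι M : Type*} [AddCommMonoid M] (s : Multiset ι)
    (f : ι → M) :
    (s.map fun i => ({f i} : Set M)).sum = {(s.map f).sum} := by
  rw [← Set.multiset_sum_singleton, Multiset.map_map]; rfl

lemma multiset_sum_map_hom_singleton {α M : Type*} [AddCommMonoid M] (f : Multiset α →+ M)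
    (s : Multiset α) : (s.map fun x => f {x}).sum = f s := by
  conv_rhs => rw [← Multiset.sum_map_singleton s, map_multiset_sum, Multiset.map_map]
  rfl

section Interpretation

open scoped Pointwise

variable (e : D ≃ Multiset D × D) (star : D)

lemma buildD_cons (a : Multiset D) (as : List (Multiset D)) :
    buildD e star (a :: as) = e.symm (a, buildD e star as) := rfl

lemma buildD_append (as bs : List (Multiset D)) :
    buildD e star (as ++ bs) = buildD e (buildD e star bs) as :=
  List.foldr_append

lemma seqD_buildD (hstar : e star = (0, star)) (as : List (Multiset D)) (i : ℕ) :
    seqD e i (buildD e star as) = as.getD i 0 := by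
  induction as generalizing i with
  | nil =>
    induction i with
    | zero => simp [buildD, seqD, hstar]
    | succ i ih => simpa [buildD, seqD, hstar] using ih
  | cons a as ih => cases i <;> simp [buildD_cons, seqD, ih]

lemma interpTest_nil : interpTest e star [] = 0 := by
  rw [interpTest]; rfl

lemma interpTest_cons (L : Tm) (V : List Tm) :
    interpTest e star (L :: V) = {ρ | (ρ, star) ∈ interp e star L} + interpTest e star V := by
  ext ρ
  simp only [interpTest, Set.mem_add, Set.mem_ofPred_eq]
  constructor
  · rintro ⟨ρ₁, ρ₂, rfl, h₁, h₂⟩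
    exact ⟨ρ₁, h₁, ρ₂, h₂, rfl⟩
  · rintro ⟨ρ₁, h₁, ρ₂, h₂, rfl⟩
    exact ⟨ρ₁, ρ₂, rfl, h₁, h₂⟩

lemma interpTest_append (V W : List Tm) :
    interpTest e star (V ++ W) = interpTest e star V + interpTest e star W := by
  induction V with
  | nil => rw [List.nil_append, interpTest_nil, zero_add]
  | cons L V ih => rw [List.cons_append, interpTest_cons, interpTest_cons, ih, add_assoc]

lemma interpTest_parallel (ts : List (List Tm)) :
    interpTest e star (parallel ts) = (ts.map (interpTest e star)).sum := by
  induction ts with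
  | nil => exact interpTest_nil e star
  | cons t ts ih => rw [List.map_cons, List.sum_cons, ← ih, ← interpTest_append]; rfl

lemma interpTest_singleton (L : Tm) :
    interpTest e star [L] = {ρ | (ρ, star) ∈ interp e star L} := by
  rw [interpTest_cons, interpTest_nil, add_zero]

lemma interpBag_nil : interpBag e star [] = 0 := by
  rw [interpBag]; exact Set.singleton_prod_singleton

lemma interpBag_cons (L : Tm) (P : List Tm) :
    interpBag e star (L :: P) =
      (fun q => (q.1, {q.2})) '' interp e star L + interpBag e star P := by
  ext q
  simp only [interpBag, Set.mem_add, Set.mem_image, Set.mem_ofPred_eq]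
  constructor
  · rintro ⟨ρ₁, ρ₂, β, b, hq₁, hβ, hb, hq₂⟩
    exact ⟨_, ⟨(ρ₁, β), hβ, rfl⟩, (ρ₂, b), hb,
      Prod.ext hq₁.symm (hq₂ ▸ Multiset.singleton_add β b)⟩
  · rintro ⟨_, ⟨⟨ρ₁, β⟩, hβ, rfl⟩, ⟨ρ₂, b⟩, hb, rfl⟩
    exact ⟨ρ₁, ρ₂, β, b, rfl, hβ, hb, Multiset.singleton_add β b⟩

lemma interpBag_eq_sum (P : List Tm) :
    interpBag e star P = (P.map fun L => (fun q => (q.1, {q.2})) '' interp e star L).sum := by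
  induction P with
  | nil => exact interpBag_nil e star
  | cons L P ih => rw [List.map_cons, List.sum_cons, ← ih, interpBag_cons]

lemma interpBag_toList_map (p : D → Tm) (a : Multiset D)
    (hp : ∀ β ∈ a, interp e star (p β) = {(0, β)}) :
    interpBag e star (a.map p).toList = {(0, a)} := by
  let inr := AddMonoidHom.inr (ℕ → Multiset D) (Multiset D)
  have hpoint : ∀ β ∈ a, (fun q => (q.1, {q.2})) '' interp e star (p β) = {inr {β}} :=
    fun β hβ => by rw [hp β hβ, Set.image_singleton]; rfl
  rw [interpBag_eq_sum, Multiset.sum_map_toList, Multiset.map_map, Function.comp_def,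
    Multiset.map_congr rfl hpoint, Set.multiset_sum_map_singleton, multiset_sum_map_hom_singleton]
  rfl

lemma mem_interp_app_iff (M : Tm) (P : List Tm) (a : Multiset D)
    (hP : interpBag e star P = {(0, a)}) (ρ : ℕ → Multiset D) (δ : D) :
    (ρ, δ) ∈ interp e star (Tm.app M P) ↔ (ρ, e.symm (a, δ)) ∈ interp e star M := by
  simp only [interp, hP, Set.mem_ofPred_eq, Set.mem_singleton_iff, Prod.mk.injEq]
  constructor
  · rintro ⟨ρ₁, _, _, rfl, h, rfl, rfl⟩
    rwa [add_zero]
  · intro h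
    exact ⟨ρ, 0, a, (add_zero ρ).symm, h, rfl, rfl⟩

lemma mem_interp_foldl_app_iff (bag : Multiset D → List Tm) (as : List (Multiset D))
    (hbag : ∀ a ∈ as, interpBag e star (bag a) = {(0, a)}) (M : Tm) (ρ : ℕ → Multiset D)
    (δ : D) :
    (ρ, δ) ∈ interp e star ((as.map bag).foldl Tm.app M) ↔
      (ρ, buildD e δ as) ∈ interp e star M := by
  induction as generalizing M with
  | nil => rfl
  | cons a as ih =>
    rw [List.map_cons, List.foldl_cons, ih (fun a' ha' => hbag a' (List.mem_cons_of_mem a ha')),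
      mem_interp_app_iff e star M _ a (hbag a List.mem_cons_self)]
    rfl

lemma interpTest_minusSpec (p : D → Tm) (as : List (Multiset D))
    (hp : ∀ i, ∀ β ∈ as.getD i 0, interp e star (p β) = {(0, β)}) (x : ℕ) :
    interpTest e star (minusSpec p as (Tm.var x)) =
      {ρ | ρ x = {buildD e star as} ∧ ∀ z, z ≠ x → ρ z = 0} := by
  have hbag : ∀ a ∈ as, interpBag e star (a.map p).toList = {(0, a)} := by
    intro a ha
    obtain ⟨i, hi, rfl⟩ := List.mem_iff_getElem.1 ha
    exact interpBag_toList_map e star p _ fun β hβ => hp i β (by rwa [List.getD_eq_getElem])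
  ext ρ
  rw [minusSpec, interpTest_singleton, Set.mem_ofPred_eq,
    mem_interp_foldl_app_iff e star _ as hbag, interp]
  rfl

lemma interp_lam (y : ℕ) (M : Tm) (σ : ℕ → Multiset D) (α : D)
    (hM : interp e star M = {(σ, α)}) :
    interp e star (Tm.lam y M) = {(Function.update σ y 0, e.symm (σ y, α))} := by
  ext ⟨ρ, β⟩
  simp only [interp, hM, Set.mem_ofPred_eq, Set.mem_singleton_iff, Prod.mk.injEq]
  constructor
  · rintro ⟨b, _, rfl, hρy, hupd, rfl⟩
    obtain rfl : b = σ y := by rw [← hupd, Function.update_self]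
    rw [← hupd, Function.update_idem, Function.update_eq_self_iff.2 hρy.symm]
    exact ⟨rfl, rfl⟩
  · rintro ⟨rfl, rfl⟩
    exact ⟨σ y, α, rfl, Function.update_self .., by
      rw [Function.update_idem, Function.update_eq_self], rfl⟩

lemma lamMany_succ (n : ℕ) (body : Tm) :
    lamMany (n + 1) body = lamMany n (Tm.lam n body) := by
  rw [lamMany, List.range_succ, List.foldr_append]; rfl

lemma interp_lamMany (n : ℕ) (body : Tm) (σ : ℕ → Multiset D) (α : D)
    (h : interp e star body = {(σ, α)}) :
    interp e star (lamMany n body) =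
      {(fun z => if z < n then 0 else σ z, buildD e α ((List.range n).map σ))} := by
  induction n generalizing body σ α with
  | zero => simpa [lamMany, buildD] using h
  | succ n ih =>
    rw [lamMany_succ, ih _ _ _ (interp_lam e star n body σ α h), List.range_succ,
      List.map_append, buildD_append]
    congr 2
    · funext z
      split_ifs <;> simp_all [Function.update_apply] <;> omega
    · refine congrArg _ (List.map_congr_left fun i hi => ?_)
      exact Function.update_of_ne (List.mem_range.1 hi).ne _ _

lemma interp_plusSpec (mt : D → Tm → List Tm) (as : List (Multiset D))
    (hmt : ∀ i, ∀ β ∈ as.getD i 0,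
      interpTest e star (mt β (Tm.var i)) = {ρ | ρ i = {β} ∧ ∀ z, z ≠ i → ρ z = 0}) :
    interp e star (plusSpec mt as) = {(0, buildD e star as)} := by
  have hsummand : ∀ i, interpTest e star
      (parallel ((as.getD i 0).toList.map fun β => mt β (Tm.var i))) =
        {Pi.single i (as.getD i 0)} := by
    intro i
    rw [interpTest_parallel, List.map_map, List.map_congr_left fun β hβ => by
      rw [Function.comp_apply, hmt i β (Multiset.mem_toList.1 hβ),
        setOf_eq_singleton_pi_single], Set.list_sum_map_singleton, Multiset.sum_map_toList]
    exact congrArg _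
      (multiset_sum_map_hom_singleton (AddMonoidHom.single (fun _ => Multiset D) i) _)
  have htest : interpTest e star (parallel ((List.range as.length).map fun i =>
      parallel ((as.getD i 0).toList.map fun β => mt β (Tm.var i)))) =
        {fun j => as.getD j 0} := by
    simp only [interpTest_parallel, List.map_map, Function.comp_def, hsummand]
    rw [Set.list_sum_map_singleton, sum_range_pi_single_getD]
  rw [plusSpec, interp_lamMany e star _ _ (fun j => as.getD j 0) star, map_range_getD]
  · congr
    funext z
    split_ifs with hz
    · rfl
    · exact List.getD_eq_default _ _ (not_lt.1 hz)
  · ext ⟨ρ, β⟩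
    rw [interp, Set.mem_ofPred_eq, htest, Set.mem_singleton_iff, Set.mem_singleton_iff,
      Prod.mk.injEq, and_comm]
end Interpretation

/-- `p` and `mt` are the maps `α ↦ α⁺` and `α ↦ α⁻[·]`, characterized by `hp`, `hmt` on the
canonical decompositions `α = a₁ :: ⋯ :: a_r :: *` (with `a_r ≠ []`). -/
theorem definability_of_points (e : D ≃ Multiset D × D) (star : D)
    (hstar : e star = (0, star))
    (hwf : WellFounded (fun β α : D => ∃ i : ℕ, β ∈ seqD e i α))
    (hqf : ∀ α : D, ∃ as : List (Multiset D),
      (∀ h : as ≠ [], as.getLast h ≠ 0) ∧ α = buildD e star as)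
    (p : D → Tm) (mt : D → Tm → List Tm)
    (hp : ∀ as : List (Multiset D), (∀ h : as ≠ [], as.getLast h ≠ 0) →
      p (buildD e star as) = plusSpec mt as)
    (hmt : ∀ as : List (Multiset D), (∀ h : as ≠ [], as.getLast h ≠ 0) →
      ∀ M : Tm, mt (buildD e star as) M = minusSpec p as M) :
    ∀ (α : D) (x : ℕ),
      interp e star (p α) = {q | q.1 = 0 ∧ q.2 = α} ∧
      interpTest e star (mt α (Tm.var x)) =
        {ρ : ℕ → Multiset D | ρ x = {α} ∧ ∀ z : ℕ, z ≠ x → ρ z = 0} := by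
  intro α
  induction α using hwf.induction with
  | _ α ih =>
  obtain ⟨as, hlast, rfl⟩ := hqf α
  have ih_entries (i : ℕ) (β : D) (hβ : β ∈ as.getD i 0) :=
    ih β ⟨i, by rwa [seqD_buildD e star hstar]⟩
  intro x
  constructor
  · rw [hp as hlast, interp_plusSpec e star mt as fun i β hβ => (ih_entries i β hβ i).2]
    exact Set.singleton_prod_singleton.symm
  · rw [hmt as hlast]
    exact interpTest_minusSpec e star p as
      (fun i β hβ => (ih_entries i β hβ 0).1.trans Set.singleton_prod_singleton) x
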